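/- arXiv:1004.3655 — 2 statements merged into one kernel-verified Lean document; each statement's English description precedes it below -/
import Mathlib

section
/- Every family (𝒜_i)_{i∈I} of finiteness spaces admits a least upper bound and a greatest lower bound for the finiteness inclusion order ⊑. Explicitly: the pair with web ⋃_i |𝒜_i| and structure (⋃_i F(𝒜_i))^⊥⊥ (predual taken on ⋃_i |𝒜_i|) is a finiteness space and is the ⊑-least upper bound, and the pair with web ⋂_i |𝒜_i| and structure ⋂_i F(𝒜_i) is a finiteness space and is the ⊑-greatest lower bound. Hence finiteness spaces form a complete lattice with respect to ⊑. -/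
open Set

namespace FinitenessPaper

/-- The predual of a set `F` of subsets of `A`:
all subsets of `A` whose intersection with every member of `F` is finite. -/
def predual {α : Type*} (A : Set α) (F : Set (Set α)) : Set (Set α) :=
  {a' | a' ⊆ A ∧ ∀ a ∈ F, (a ∩ a').Finite}

/-- A finiteness space: a web together with a finiteness structure on it. -/
structure FinSpace (α : Type*) where
  web : Set α
  fin : Set (Set α)
  isFin : predual web (predual web fin) = fin

section

variable {α : Type*}

theorem subset_predual_predual {A : Set α} {F : Set (Set α)} (hF : ∀ a ∈ F, a ⊆ A) :
    F ⊆ predual A (predual A F) :=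
  fun a ha => ⟨hF a ha, fun b hb => inter_comm a b ▸ hb.2 a ha⟩

/-- The trace `b ∩ A` of a member `b` of the predual on `B` lies in the predual on `A`,
so every member of the bidual on `A` meets `b` finitely. -/
theorem predual_predual_mono {A B : Set α} {G H : Set (Set α)} (hAB : A ⊆ B) (hGH : G ⊆ H) :
    predual A (predual A G) ⊆ predual B (predual B H) := by
  rintro a' ⟨ha'A, ha'⟩
  refine ⟨ha'A.trans hAB, fun b hb => ?_⟩
  have hbA : b ∩ A ∈ predual A G :=
    ⟨inter_subset_right, fun a ha =>
      (hb.2 a (hGH ha)).subset (inter_subset_inter_right a inter_subset_left)⟩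
  exact (ha' _ hbA).subset fun x hx => ⟨⟨hx.1, ha'A hx.2⟩, hx.2⟩

theorem predual_predual_predual (A : Set α) (F : Set (Set α)) :
    predual A (predual A (predual A F)) = predual A F := by
  refine Subset.antisymm ?_ (subset_predual_predual fun b hb => hb.1)
  rintro a' ⟨ha'A, ha'⟩
  refine ⟨ha'A, fun a ha => ?_⟩
  have haA : a ∩ A ∈ predual A (predual A F) :=
    ⟨inter_subset_right, fun b hb => (hb.2 a ha).subset fun x hx => ⟨hx.2.1, hx.1⟩⟩
  exact (ha' _ haA).subset fun x hx => ⟨⟨hx.1, ha'A hx.2⟩, hx.2⟩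

namespace FinSpace

theorem subset_web_of_mem_fin (X : FinSpace α) {a : Set α} (ha : a ∈ X.fin) : a ⊆ X.web := by
  rw [← X.isFin] at ha
  exact ha.1

theorem predual_predual_subset_fin (X : FinSpace α) {A : Set α} {F : Set (Set α)}
    (hA : A ⊆ X.web) (hF : F ⊆ X.fin) : predual A (predual A F) ⊆ X.fin :=
  X.isFin ▸ predual_predual_mono hA hF

variable {I : Type*}

def iSup (A : I → FinSpace α) : FinSpace α where
  web := ⋃ i, (A i).web
  fin := predual (⋃ i, (A i).web) (predual (⋃ i, (A i).web) (⋃ i, (A i).fin))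
  isFin := predual_predual_predual _ _

def iInf (A : I → FinSpace α) : FinSpace α where
  web := ⋂ i, (A i).web
  fin := ⋂ i, (A i).fin
  isFin := Subset.antisymm
    (subset_iInter fun i =>
      (A i).predual_predual_subset_fin (iInter_subset _ i) (iInter_subset _ i))
    (subset_predual_predual fun _ ha =>
      subset_iInter fun i => (A i).subset_web_of_mem_fin (mem_iInter.1 ha i))

theorem fin_subset_iSup_fin (A : I → FinSpace α) (i : I) : (A i).fin ⊆ (iSup A).fin := by
  refine (subset_iUnion (fun i => (A i).fin) i).trans (subset_predual_predual fun a ha => ?_)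
  obtain ⟨j, hj⟩ := mem_iUnion.1 ha
  exact ((A j).subset_web_of_mem_fin hj).trans (subset_iUnion (fun i => (A i).web) j)

end FinSpace

end

/-- Every family of finiteness spaces admits a least upper bound (web the union
of the webs, structure the bidual of the union of the structures) and a greatest
lower bound (web the intersection of the webs, structure the intersection of the
structures) for the finiteness inclusion order `⊑` (web inclusion together with
structure inclusion); hence finiteness spaces form a complete lattice w.r.t. `⊑`. -/
theorem fsSup_fsInf_lub_glb {α : Type*} {I : Type*} (A : I → FinSpace α) :
    let Wsup : Set α := ⋃ i, (A i).web
    let Fsup : Set (Set α) := predual Wsup (predual Wsup (⋃ i, (A i).fin))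
    let Winf : Set α := ⋂ i, (A i).web
    let Finf : Set (Set α) := ⋂ i, (A i).fin
    -- the supremum is a finiteness space
    (predual Wsup (predual Wsup Fsup) = Fsup) ∧
    -- it is an upper bound for ⊑
    (∀ i, (A i).web ⊆ Wsup ∧ (A i).fin ⊆ Fsup) ∧
    -- and the least one
    (∀ C : FinSpace α, (∀ i, (A i).web ⊆ C.web ∧ (A i).fin ⊆ C.fin) →
      Wsup ⊆ C.web ∧ Fsup ⊆ C.fin) ∧
    -- the infimum is a finiteness space
    (predual Winf (predual Winf Finf) = Finf) ∧
    -- it is a lower bound for ⊑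
    (∀ i, Winf ⊆ (A i).web ∧ Finf ⊆ (A i).fin) ∧
    -- and the greatest one
    (∀ C : FinSpace α, (∀ i, C.web ⊆ (A i).web ∧ C.fin ⊆ (A i).fin) →
      C.web ⊆ Winf ∧ C.fin ⊆ Finf) := by
  intro Wsup Fsup Winf Finf
  refine ⟨(FinSpace.iSup A).isFin, fun i => ⟨subset_iUnion (fun i => (A i).web) i, FinSpace.fin_subset_iSup_fin A i⟩,
    fun C hC => ?_, (FinSpace.iInf A).isFin, fun i => ⟨iInter_subset _ i, iInter_subset _ i⟩,
    fun C hC => ⟨subset_iInter fun i => (hC i).1, subset_iInter fun i => (hC i).2⟩⟩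
  have hweb : Wsup ⊆ C.web := iUnion_subset fun i => (hC i).1
  exact ⟨hweb, C.predual_predual_subset_fin hweb (iUnion_subset fun i => (hC i).2)⟩

end FinitenessPaper
end

section
/- Let 𝒜 and ℬ be finiteness spaces and f ⊆ M(|𝒜|) × |ℬ| a multirelation. Then f ∈ F(𝒜 ⇒ ℬ) if and only if for all a ∈ F(𝒜): f[a^!] ∈ F(ℬ), and for all β ∈ |ℬ|, f⁻¹[{β}] ∩ a^! is finite. -/
/-!
For `a ∈ F(𝒜)` the set `a^!` is finitary in `!𝒜`, so `a^! × b'` (with `b' ∈ F(ℬ)^⊥`) and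
`a^! × {β}` are finitary in `!𝒜 ⊗ ℬ^⊥`; their finite intersections with `f` project onto
`f[a^!] ∩ b'` and `f⁻¹[{β}] ∩ a^!`. Conversely, a finitary `c` of `!𝒜 ⊗ ℬ^⊥` lies in
`a^! × π₂[c]`, where `a ∈ F(𝒜)` is the union of the supports of `π₁[c]`; so `c ∩ f` lies above
the finite set `f[a^!] ∩ π₂[c]`, with each fibre inside the finite set `f⁻¹[{β}] ∩ a^!`.
-/

open Set

namespace FinitenessPaper

/-- Direct image of a set under a relation. -/
def rimage {α β : Type*} (f : Set (α × β)) (a : Set α) : Set β := {y | ∃ x ∈ a, (x, y) ∈ f}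

/-- Reverse relation. -/
def rrev {α β : Type*} (f : Set (α × β)) : Set (β × α) := {p | (p.2, p.1) ∈ f}

/-- `a^! = M(a)`: the set of finite multisets all of whose elements lie in `a`. -/
def bangSet {α : Type*} (a : Set α) : Set (Multiset α) := {μ | ∀ x ∈ μ, x ∈ a}

/-- The finiteness structure of the exponential `!`, given by web and structure. -/
def bangFinS {α : Type*} (W : Set α) (F : Set (Set α)) : Set (Set (Multiset α)) :=
  {s | s ⊆ bangSet W ∧ (⋃ μ ∈ s, {x : α | x ∈ μ}) ∈ F}

/-- The finiteness structure of the tensor product, given by webs and structures. -/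
def tensFin {α β : Type*} (Wa : Set α) (Fa : Set (Set α)) (Wb : Set β)
    (Fb : Set (Set β)) : Set (Set (α × β)) :=
  {c | c ⊆ Wa ×ˢ Wb ∧ Prod.fst '' c ∈ Fa ∧ Prod.snd '' c ∈ Fb}

/-- The finiteness structure of `𝒜 ⇒ ℬ = !𝒜 ⊸ ℬ = (!𝒜 ⊗ ℬ^⊥)^⊥`,
given by webs and structures. -/
def impFinS {α β : Type*} (Wa : Set α) (Fa : Set (Set α)) (Wb : Set β)
    (Fb : Set (Set β)) : Set (Set (Multiset α × β)) :=
  predual (bangSet Wa ×ˢ Wb)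
    (tensFin (bangSet Wa) (bangFinS Wa Fa) Wb (predual Wb Fb))

section Multirelations

variable {α β : Type*}

theorem FinSpace.subset_web (A : FinSpace α) {a : Set α} (ha : a ∈ A.fin) : a ⊆ A.web := by
  rw [← A.isFin] at ha
  exact ha.1

theorem singleton_mem_predual {W : Set α} {F : Set (Set α)} {x : α} (hx : x ∈ W) :
    {x} ∈ predual W F :=
  ⟨singleton_subset_iff.mpr hx, fun _ _ => (finite_singleton x).subset inter_subset_right⟩

theorem biUnion_bangSet (a : Set α) : (⋃ μ ∈ bangSet a, {x : α | x ∈ μ}) = a := by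
  refine Subset.antisymm (iUnion₂_subset fun μ hμ x hx => hμ x hx) fun x hx => ?_
  exact mem_biUnion (x := {x}) (fun y hy => Multiset.mem_singleton.mp hy ▸ hx)
    (Multiset.mem_singleton_self x)

theorem subset_bangSet_biUnion (s : Set (Multiset α)) :
    s ⊆ bangSet (⋃ μ ∈ s, {x : α | x ∈ μ}) :=
  fun _ hμ _ hx => mem_biUnion hμ hx

theorem bangSet_mem_bangFinS {W a : Set α} {F : Set (Set α)} (haW : a ⊆ W) (ha : a ∈ F) :
    bangSet a ∈ bangFinS W F :=
  ⟨fun _ hμ x hx => haW (hμ x hx), by rwa [biUnion_bangSet]⟩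

theorem rimage_subset_of_subset_prod {f : Set (α × β)} {s : Set α} {t : Set β}
    (hf : f ⊆ s ×ˢ t) (a : Set α) : rimage f a ⊆ t :=
  fun _ ⟨_, _, hxy⟩ => (hf hxy).2

theorem rimage_inter_eq_image_snd (f : Set (α × β)) (s : Set α) (t : Set β) :
    rimage f s ∩ t = Prod.snd '' (f ∩ s ×ˢ t) := by
  ext y
  constructor
  · rintro ⟨⟨x, hx, hxy⟩, hy⟩
    exact ⟨(x, y), ⟨hxy, hx, hy⟩, rfl⟩
  · rintro ⟨⟨x, y⟩, ⟨hxy, hx, hy⟩, rfl⟩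
    exact ⟨⟨x, hx, hxy⟩, hy⟩

theorem rimage_rrev_singleton_inter_eq_image_fst (f : Set (α × β)) (b : β) (s : Set α) :
    rimage (rrev f) {b} ∩ s = Prod.fst '' (f ∩ s ×ˢ {b}) := by
  ext x
  constructor
  · rintro ⟨⟨_, rfl, hxb⟩, hx⟩
    exact ⟨(x, _), ⟨hxb, hx, rfl⟩, rfl⟩
  · rintro ⟨⟨x, _⟩, ⟨hxb, hx, rfl⟩, rfl⟩
    exact ⟨⟨_, rfl, hxb⟩, hx⟩

section Implication

variable {Wa : Set α} {Fa : Set (Set α)} {Wb : Set β} {Fb : Set (Set β)}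
  {f : Set (Multiset α × β)}

theorem finite_inter_prod_of_mem_impFinS (hf : f ∈ impFinS Wa Fa Wb Fb)
    {s : Set (Multiset α)} {t : Set β} (hs : s ∈ bangFinS Wa Fa) (ht : t ∈ predual Wb Fb) :
    (f ∩ s ×ˢ t).Finite := by
  rcases s.eq_empty_or_nonempty with rfl | hs₀
  · simp
  rcases t.eq_empty_or_nonempty with rfl | ht₀
  · simp
  rw [inter_comm]
  exact hf.2 _ ⟨prod_mono hs.1 ht.1, by rwa [fst_image_prod _ ht₀], by rwa [snd_image_prod hs₀]⟩

theorem mem_impFinS_of_finite_fibres (hf : f ⊆ bangSet Wa ×ˢ Wb)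
    (h : ∀ a ∈ Fa, rimage f (bangSet a) ∈ Fb ∧
      ∀ b ∈ Wb, (rimage (rrev f) {b} ∩ bangSet a).Finite) :
    f ∈ impFinS Wa Fa Wb Fb := by
  refine ⟨hf, fun c hc => ?_⟩
  set a := ⋃ μ ∈ Prod.fst '' c, {x : α | x ∈ μ}
  obtain ⟨himage, hfibre⟩ := h a hc.2.1.2
  have hc_sub : c ⊆ bangSet a ×ˢ (Prod.snd '' c) := fun p hp =>
    ⟨subset_bangSet_biUnion _ (mem_image_of_mem _ hp), mem_image_of_mem _ hp⟩
  have hsub : c ∩ f ⊆ f ∩ bangSet a ×ˢ (Prod.snd '' c) := by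
    rw [inter_comm]
    exact inter_subset_inter_right f hc_sub
  refine Finite.subset ?_ hsub
  refine Finite.of_finite_fibers Prod.snd ?_ fun b hb => ?_
  · rw [← rimage_inter_eq_image_snd]
    exact hc.2.2.2 _ himage
  · have hbW : b ∈ Wb := by
      obtain ⟨p, hp, rfl⟩ := hb
      exact (hf hp.1).2
    refine ((hfibre b hbW).image fun μ => (μ, b)).subset ?_
    rintro ⟨μ, b'⟩ ⟨⟨hμb, hμ, -⟩, hb' : b' = b⟩
    subst hb'
    exact ⟨μ, ⟨⟨b', rfl, hμb⟩, hμ⟩, rfl⟩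

end Implication

theorem rimage_bangSet_mem_fin {A : FinSpace α} {B : FinSpace β} {f : Set (Multiset α × β)}
    (hf : f ⊆ bangSet A.web ×ˢ B.web) (hfin : f ∈ impFinS A.web A.fin B.web B.fin)
    {a : Set α} (ha : a ∈ A.fin) : rimage f (bangSet a) ∈ B.fin := by
  rw [← B.isFin]
  refine ⟨rimage_subset_of_subset_prod hf _, fun t ht => ?_⟩
  rw [inter_comm, rimage_inter_eq_image_snd]
  exact (finite_inter_prod_of_mem_impFinS hfin (bangSet_mem_bangFinS (A.subset_web ha) ha)
    ht).image _

theorem finite_rimage_rrev_inter_bangSet {A : FinSpace α} {B : FinSpace β}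
    {f : Set (Multiset α × β)} (hfin : f ∈ impFinS A.web A.fin B.web B.fin)
    {a : Set α} (ha : a ∈ A.fin) {b : β} (hb : b ∈ B.web) :
    (rimage (rrev f) {b} ∩ bangSet a).Finite := by
  rw [rimage_rrev_singleton_inter_eq_image_fst]
  exact (finite_inter_prod_of_mem_impFinS hfin (bangSet_mem_bangFinS (A.subset_web ha) ha)
    (singleton_mem_predual hb)).image _

end Multirelations

/-- Characterization of finitary multirelations: `f ∈ F(𝒜 ⇒ ℬ)` iff for all
`a ∈ F(𝒜)`, `f[a^!] ∈ F(ℬ)` and, for all `β ∈ |ℬ|`, `f⁻¹[{β}] ∩ a^!` is finite. -/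
theorem finitary_multirelation_characterization {α β : Type*}
    (A : FinSpace α) (B : FinSpace β)
    (f : Set (Multiset α × β)) (hf : f ⊆ bangSet A.web ×ˢ B.web) :
    f ∈ impFinS A.web A.fin B.web B.fin ↔
      ∀ a ∈ A.fin, rimage f (bangSet a) ∈ B.fin ∧
        ∀ b ∈ B.web, (rimage (rrev f) {b} ∩ bangSet a).Finite :=
  ⟨fun hfin _ ha => ⟨rimage_bangSet_mem_fin hf hfin ha,
      fun _ hb => finite_rimage_rrev_inter_bangSet hfin ha hb⟩,
    mem_impFinS_of_finite_fibres hf⟩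

end FinitenessPaper
end
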